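/- Let (a_m)_{m≥0} be a sequence of integers with a₀ ≥ 0 and a_m ≥ 1 for m ≥ 1, and suppose (a_m) is eventually periodic. Define q₋₁ = 0, q₀ = 1, q_m = a_m·q_{m−1} + q_{m−2} for m ≥ 1, and N_m = a₀ + a₁ + ⋯ + a_m. Then the limit lim_{m→∞} (log q_m)/N_m exists. -/

import Mathlib

/-- Denominators of the convergents, shifted by one: `qConv a (m+1) = q_m`, with
`q₋₁ = 0`, `q₀ = 1`, `q_m = a_m q_{m-1} + q_{m-2}`. -/
def qConv (a : ℕ → ℤ) : ℕ → ℤ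
  | 0 => 0
  | 1 => 1
  | n + 2 => a (n + 1) * qConv a (n + 1) + qConv a n

/-- `N_m = a₀ + a₁ + ⋯ + a_m`. -/
def Nsum (a : ℕ → ℤ) (m : ℕ) : ℤ := ∑ i ∈ Finset.range (m + 1), a i

/-!
The matrices `!![a i, 1; 1, 0]` carry `(q_{m-1}, q_{m-2})` to `(q_m, q_{m-1})`. Over an even
period `d` beyond the preperiod their product `F` is unimodular, and its trace `t` does not depend
on the starting index because consecutive such products are conjugate; positivity of the entries
gives `t ≥ 3`. Cayley–Hamilton for `F` yields `q_{m+2d} = t q_{m+d} - q_m`, so along each residue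
class mod `d` the denominators grow like `A λ^k` with `λ > 1` the larger root of `X² - t X + 1`,
while `N` grows by a fixed amount `S` per period. Hence `log q_m / N_m → log λ / S`.
-/

open Matrix Filter Real Topology

theorem Nat.tendsto_of_tendsto_comp_mul_add {α : Type*} {f : ℕ → α} {l : Filter α} {d : ℕ}
    (hd : 0 < d) (h : ∀ r < d, Tendsto (fun k => f (d * k + r)) atTop l) :
    Tendsto f atTop l := by
  intro s hs
  rw [mem_map]
  have hall : ∀ᶠ k in atTop, ∀ r : Fin d, f (d * k + r) ∈ s :=
    eventually_all.2 fun r => h r r.2 hs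
  obtain ⟨K, hK⟩ := eventually_atTop.1 hall
  filter_upwards [eventually_ge_atTop (d * K)] with n hn
  have hKn : K ≤ n / d := (Nat.le_div_iff_mul_le hd).2 (by rwa [mul_comm])
  simpa only [Set.mem_preimage, Nat.div_add_mod] using hK (n / d) hKn ⟨n % d, Nat.mod_lt _ hd⟩

theorem sub_mul_eq_of_recurrence {R : Type*} [CommRing R] {x : ℕ → R} {t lam mu : R}
    (hsum : lam + mu = t) (hprod : lam * mu = 1) (hrec : ∀ k, x (k + 2) = t * x (k + 1) - x k)
    (k : ℕ) :
    (lam - mu) * x k = (x 1 - mu * x 0) * lam ^ k - (x 1 - lam * x 0) * mu ^ k := by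
  induction k using Nat.twoStepInduction with
  | zero => ring
  | one => ring
  | more k ih₀ ih₁ =>
    rw [hrec, ← hsum]
    linear_combination (lam + mu) * ih₁ - ih₀ +
      ((x 1 - mu * x 0) * lam ^ k - (x 1 - lam * x 0) * mu ^ k) * hprod

/-- The larger root of `X ^ 2 - t * X + 1`. -/
noncomputable def largeRoot (t : ℝ) : ℝ := (t + √(t ^ 2 - 4)) / 2

theorem largeRoot_mul_sub {t : ℝ} (ht : 2 ≤ t) : largeRoot t * (t - largeRoot t) = 1 := by
  have hsq : √(t ^ 2 - 4) ^ 2 = t ^ 2 - 4 := Real.sq_sqrt (by nlinarith)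
  unfold largeRoot
  linear_combination -hsq / 4

theorem one_lt_largeRoot {t : ℝ} (ht : 2 < t) : 1 < largeRoot t := by
  unfold largeRoot
  linarith [Real.sqrt_nonneg (t ^ 2 - 4)]

theorem exists_tendsto_log_sub_mul_log_largeRoot {x : ℕ → ℝ} {t : ℝ} (ht : 2 < t)
    (hx₀ : 0 < x 0) (hx₁ : x 0 ≤ x 1) (hrec : ∀ k, x (k + 2) = t * x (k + 1) - x k) :
    ∃ c, Tendsto (fun k : ℕ => log (x k) - k * log (largeRoot t)) atTop (𝓝 c) := by
  have hprod := largeRoot_mul_sub ht.le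
  have hlam := one_lt_largeRoot ht
  generalize largeRoot t = lam at hprod hlam ⊢
  obtain ⟨mu, rfl⟩ : ∃ mu, t = lam + mu := ⟨t - lam, by ring⟩
  rw [add_sub_cancel_left] at hprod
  have hmu : 0 < mu := pos_of_mul_pos_right (hprod ▸ one_pos) (by linarith)
  have hmu_lt : mu < lam := by nlinarith
  set A := (x 1 - mu * x 0) / (lam - mu)
  set B := (x 1 - lam * x 0) / (lam - mu)
  have hA : 0 < A := div_pos (by nlinarith) (by linarith)
  have hratio : Tendsto (fun k : ℕ => (mu / lam) ^ k) atTop (𝓝 0) :=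
    tendsto_pow_atTop_nhds_zero_of_lt_one (by positivity) ((div_lt_one (by linarith)).2 hmu_lt)
  have hnormalized : Tendsto (fun k : ℕ => x k / lam ^ k) atTop (𝓝 A) := by
    have hclosed (k : ℕ) : x k / lam ^ k = A - B * (mu / lam) ^ k := by
      have hlam₀ : lam ≠ 0 := by positivity
      have hk := sub_mul_eq_of_recurrence rfl hprod hrec k
      rw [div_eq_iff (pow_ne_zero k hlam₀), sub_mul, mul_assoc, ← mul_pow,
        div_mul_cancel₀ _ hlam₀]
      have hne : lam - mu ≠ 0 := by linarith
      simp only [A, B]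
      field_simp
      linear_combination hk
    simpa [hclosed] using (hratio.const_mul B).const_sub A
  refine ⟨log A, ((continuousAt_log hA.ne').tendsto.comp hnormalized).congr' ?_⟩
  filter_upwards [hnormalized.eventually (lt_mem_nhds hA)] with k hk
  have hxk : 0 < x k := by simpa using (div_pos_iff_of_pos_right (pow_pos (by linarith) k)).1 hk
  simp only [Function.comp_apply]
  rw [log_div hxk.ne' (pow_pos (by linarith) k).ne', log_pow]

theorem tendsto_div_add_mul_of_tendsto_sub_mul {u : ℕ → ℝ} {c c' S : ℝ} (N₀ : ℝ)
    (hS : 0 < S)    (hu : Tendsto (fun k : ℕ => u k - k * c) atTop (𝓝 c')) :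
    Tendsto (fun k : ℕ => u k / (N₀ + k * S)) atTop (𝓝 (c / S)) := by
  have hk : Tendsto (fun k : ℕ => (k : ℝ)) atTop atTop := tendsto_natCast_atTop_atTop
  have hquot : Tendsto (fun k : ℕ => ((u k - k * c) / k + c) / (N₀ / k + S)) atTop
      (𝓝 ((0 + c) / (0 + S))) :=
    ((hu.div_atTop hk).add_const c).div ((tendsto_const_nhds.div_atTop hk).add_const S)
      (by simpa using hS.ne')
  rw [zero_add, zero_add] at hquot
  refine hquot.congr' ?_
  filter_upwards [eventually_gt_atTop 0] with k hk
  field_simp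
  ring

theorem tendsto_log_div_of_periodic_recurrence {u N : ℕ → ℝ} {d p : ℕ} {t S : ℝ}
    (hd : 0 < d) (ht : 2 < t) (hS : 0 < S) (hpos : ∀ m, p ≤ m → 0 < u m)
    (hmono : ∀ m, p ≤ m → u m ≤ u (m + d))
    (hrec : ∀ m, p ≤ m → u (m + 2 * d) = t * u (m + d) - u m)
    (hN : ∀ m, p ≤ m → N (m + d) = N m + S) :
    Tendsto (fun m => log (u m) / N m) atTop (𝓝 (log (largeRoot t) / S)) := by
  rw [← tendsto_add_atTop_iff_nat p]
  refine Nat.tendsto_of_tendsto_comp_mul_add hd fun r _ => ?_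
  have hshift (k j : ℕ) : d * (k + j) + r + p = (d * k + r + p) + d * j := by ring
  have hNk (k : ℕ) : N (d * k + r + p) = N (r + p) + k * S := by
    induction k with
    | zero => simp
    | succ k ih => rw [hshift, mul_one, hN _ (by omega), ih]; push_cast; ring
  set x : ℕ → ℝ := fun k => u (d * k + r + p)
  have hx₀ : 0 < x 0 := hpos _ (by omega)
  have hx₁ : x 0 ≤ x 1 := by convert hmono (r + p) (by omega) using 2 <;> ring
  have hxrec (k : ℕ) : x (k + 2) = t * x (k + 1) - x k := by
    simpa only [x, hshift k 2, hshift k 1, mul_one, mul_comm d 2] using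
      hrec (d * k + r + p) (by omega)
  obtain ⟨c, hc⟩ := exists_tendsto_log_sub_mul_log_largeRoot ht hx₀ hx₁ hxrec
  simpa only [hNk] using tendsto_div_add_mul_of_tendsto_sub_mul (N (r + p)) hS hc

theorem Matrix.mul_self_eq_trace_smul_sub_det_smul {R : Type*} [CommRing R]
    (A : Matrix (Fin 2) (Fin 2) R) : A * A = A.trace • A - A.det • 1 := by
  ext i j
  fin_cases i <;> fin_cases j <;>
    simp [mul_apply, trace_fin_two, det_fin_two] <;> ring

section Transfer

variable {R : Type*} [CommRing R] (a : ℕ → R)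

def cfMatrix (i : ℕ) : Matrix (Fin 2) (Fin 2) R := !![a i, 1; 1, 0]

/-- `cfTransfer a m k = cfMatrix a (m + k) * ⋯ * cfMatrix a (m + 1)`. -/
def cfTransfer (m : ℕ) : ℕ → Matrix (Fin 2) (Fin 2) R
  | 0 => 1
  | k + 1 => cfMatrix a (m + k + 1) * cfTransfer m k

theorem det_cfMatrix (i : ℕ) : (cfMatrix a i).det = -1 := by
  simp [cfMatrix, det_fin_two_of]

theorem det_cfTransfer (m k : ℕ) : (cfTransfer a m k).det = (-1) ^ k := by
  induction k with
  | zero => simp [cfTransfer]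
  | succ k ih => rw [cfTransfer, det_mul, det_cfMatrix, ih, pow_succ']

theorem cfTransfer_succ_mul_cfMatrix (m k : ℕ) :
    cfTransfer a (m + 1) k * cfMatrix a (m + 1) = cfMatrix a (m + k + 1) * cfTransfer a m k := by
  induction k with
  | zero => simp [cfTransfer]
  | succ k ih =>
    rw [cfTransfer, cfTransfer, mul_assoc, ih, ← mul_assoc, ← mul_assoc, add_right_comm m 1 k]
    rfl

theorem trace_cfTransfer_succ {m k : ℕ} (h : a (m + k + 1) = a (m + 1)) :
    (cfTransfer a (m + 1) k).trace = (cfTransfer a m k).trace := by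
  have hunit : IsUnit (cfMatrix a (m + 1)).det := by simp [det_cfMatrix]
  have hcomm := cfTransfer_succ_mul_cfMatrix a m k
  rw [show cfMatrix a (m + k + 1) = cfMatrix a (m + 1) by rw [cfMatrix, h, cfMatrix]] at hcomm
  calc (cfTransfer a (m + 1) k).trace
      = (cfTransfer a (m + 1) k * cfMatrix a (m + 1) * (cfMatrix a (m + 1))⁻¹).trace := by
        rw [mul_nonsing_inv_cancel_right _ _ hunit]
    _ = (cfTransfer a m k).trace := by
        rw [hcomm, trace_conj ((isUnit_iff_isUnit_det _).2 hunit)]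

theorem cfTransfer_add_eq_of_periodic {m d k : ℕ}
    (hper : ∀ i, m < i → i ≤ m + k → a (i + d) = a i) :
    cfTransfer a (m + d) k = cfTransfer a m k := by
  induction k with
  | zero => rfl
  | succ k ih =>
    rw [cfTransfer, cfTransfer, ih fun i h₁ h₂ => hper i h₁ (by omega), cfMatrix, cfMatrix,
      add_right_comm m d, add_right_comm _ d, hper _ (by omega) (by omega)]

theorem trace_cfTransfer_eq_of_periodic {p d m : ℕ} (hper : ∀ i, p < i → a (i + d) = a i)
    (hm : p ≤ m) : (cfTransfer a m d).trace = (cfTransfer a p d).trace := by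
  induction m, hm using Nat.le_induction with
  | base => rfl
  | succ m hm ih =>
    rw [trace_cfTransfer_succ a (by rw [add_right_comm, hper _ (by omega)]), ih]

end Transfer

theorem cfTransfer_mulVec_qConv (a : ℕ → ℤ) (m k : ℕ) :
    cfTransfer a m k *ᵥ ![qConv a (m + 1), qConv a m] =
      ![qConv a (m + k + 1), qConv a (m + k)] := by
  induction k with
  | zero => simp [cfTransfer]
  | succ k ih =>
    rw [cfTransfer, ← mulVec_mulVec, ih]
    ext i
    fin_cases i <;> simp [cfMatrix, mulVec, dotProduct, Fin.sum_univ_two, qConv, ← add_assoc]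

theorem qConv_add_two_mul {a : ℕ → ℤ} {m d : ℕ}
    (hF : cfTransfer a (m + d) d = cfTransfer a m d) (hdet : (cfTransfer a m d).det = 1) :
    qConv a (m + 2 * d + 1) =
      (cfTransfer a m d).trace * qConv a (m + d + 1) - qConv a (m + 1) := by
  have h := cfTransfer_mulVec_qConv a (m + d) d
  rw [hF, ← cfTransfer_mulVec_qConv a m d, mulVec_mulVec, mul_self_eq_trace_smul_sub_det_smul,
    hdet, one_smul, sub_mulVec, smul_mulVec, cfTransfer_mulVec_qConv, one_mulVec] at h
  simpa [two_mul, add_assoc] using (congrFun h 0).symm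

theorem Nsum_succ (a : ℕ → ℤ) (m : ℕ) : Nsum a (m + 1) = Nsum a m + a (m + 1) :=
  Finset.sum_range_succ _ _

theorem Nsum_add_eq_of_periodic {a : ℕ → ℤ} {p d m : ℕ}
    (hper : ∀ i, p < i → a (i + d) = a i) (hm : p ≤ m) :
    Nsum a (m + d) = Nsum a m + (Nsum a (p + d) - Nsum a p) := by
  induction m, hm using Nat.le_induction with
  | base => ring
  | succ m hm ih =>
    rw [add_right_comm, Nsum_succ, ih, Nsum_succ, add_right_comm m d, hper (m + 1) (by omega)]
    ring

section Positive

variable {a : ℕ → ℤ} (ha : ∀ m, 1 ≤ m → 1 ≤ a m)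
include ha

theorem monotone_qConv : Monotone (qConv a) := by
  have h (n : ℕ) : 0 ≤ qConv a n ∧ qConv a n ≤ qConv a (n + 1) := by
    induction n with
    | zero => simp [qConv]
    | succ n ih =>
      have hq : 0 ≤ qConv a (n + 1) := ih.1.trans ih.2
      refine ⟨hq, ?_⟩
      rw [qConv]
      nlinarith [ha (n + 1) (by omega)]
  exact monotone_nat_of_le_succ fun n => (h n).2

theorem strictMono_Nsum : StrictMono (Nsum a) :=
  strictMono_nat_of_lt_succ fun n => by linarith [Nsum_succ a n, ha (n + 1) (by omega)]

theorem one_le_cfTransfer_apply (m : ℕ) {k : ℕ} (hk : 2 ≤ k) (i j : Fin 2) :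
    1 ≤ cfTransfer a m k i j := by
  have row_zero (k : ℕ) (j : Fin 2) : cfTransfer a m (k + 1) 0 j =
      a (m + k + 1) * cfTransfer a m k 0 j + cfTransfer a m k 1 j := by
    simp [cfTransfer, cfMatrix, mul_apply, Fin.sum_univ_two]
  have row_one (k : ℕ) (j : Fin 2) : cfTransfer a m (k + 1) 1 j = cfTransfer a m k 0 j := by
    simp [cfTransfer, cfMatrix, mul_apply, Fin.sum_univ_two]
  have hcol (k : ℕ) : (∀ i j, 0 ≤ cfTransfer a m k i j) ∧
      ∀ j, 1 ≤ cfTransfer a m k 0 j + cfTransfer a m k 1 j := by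
    induction k with
    | zero => refine ⟨?_, ?_⟩ <;> simp [cfTransfer, Fin.forall_fin_two]
    | succ k ih =>
      have hak := ha (m + k + 1) (by omega)
      refine ⟨fun i j => ?_, fun j => ?_⟩
      · fin_cases i
        · simp only [Fin.zero_eta, row_zero]; nlinarith [ih.1 0 j, ih.1 1 j]
        · simp only [Fin.mk_one, row_one]; exact ih.1 0 j
      · rw [row_zero, row_one]; nlinarith [ih.1 0 j, ih.2 j]
  have hrow (k : ℕ) (j : Fin 2) : 1 ≤ cfTransfer a m (k + 1) 0 j := by
    rw [row_zero]; nlinarith [(hcol k).1 0 j, (hcol k).2 j, ha (m + k + 1) (by omega)]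
  obtain ⟨k, rfl⟩ := Nat.exists_eq_add_of_le' hk
  fin_cases i
  · exact hrow (k + 1) j
  · simpa only [Fin.mk_one, row_one] using hrow k j

theorem three_le_trace_cfTransfer (m : ℕ) {k : ℕ} (hk : 2 ≤ k) (heven : Even k) :
    3 ≤ (cfTransfer a m k).trace := by
  have hdet := det_cfTransfer a m k
  rw [heven.neg_one_pow, det_fin_two] at hdet
  have h := one_le_cfTransfer_apply ha m hk
  rw [trace_fin_two]
  nlinarith [h 0 0, h 0 1, h 1 0, h 1 1]

end Positive

theorem stmt12_general (a : ℕ → ℤ) (ha : ∀ m, 1 ≤ m → 1 ≤ a m)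
    (p l : ℕ) (hl : 1 ≤ l) (hper : ∀ m, p < m → a (m + l) = a m) :
    ∃ L : ℝ, Filter.Tendsto
      (fun m : ℕ => Real.log ((qConv a (m + 1) : ℤ) : ℝ) / ((Nsum a m : ℤ) : ℝ))
      Filter.atTop (nhds L) := by
  -- an even period makes the transfer matrix over one period unimodular
  obtain ⟨d, hd_even, hd, hperd⟩ :
      ∃ d, Even d ∧ 2 ≤ d ∧ ∀ i, p < i → a (i + d) = a i :=
    ⟨2 * l, even_two_mul l, by omega, fun i hi => by
      rw [two_mul, ← add_assoc, hper _ (by omega), hper i hi]⟩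
  set t := (cfTransfer a p d).trace
  have ht : 3 ≤ t := three_le_trace_cfTransfer ha p hd hd_even
  have hrec (m : ℕ) (hm : p ≤ m) :
      qConv a (m + 2 * d + 1) = t * qConv a (m + d + 1) - qConv a (m + 1) := by
    have hdet : (cfTransfer a m d).det = 1 := by rw [det_cfTransfer, hd_even.neg_one_pow]
    have hF : cfTransfer a (m + d) d = cfTransfer a m d :=
      cfTransfer_add_eq_of_periodic a fun i hi _ => hperd i (by omega)
    have h := qConv_add_two_mul hF hdet
    rwa [trace_cfTransfer_eq_of_periodic a hperd hm] at h
  have hS : 0 < Nsum a (p + d) - Nsum a p := sub_pos.2 (strictMono_Nsum ha (by omega))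
  refine ⟨log (largeRoot t) / (Nsum a (p + d) - Nsum a p : ℤ), ?_⟩
  refine tendsto_log_div_of_periodic_recurrence (p := p) (d := d) (by omega)
    (by exact_mod_cast ht) (by exact_mod_cast hS) (fun m _ => ?_) (fun m _ => ?_)
    (fun m hm => by exact_mod_cast hrec m hm)
    (fun m hm => by exact_mod_cast Nsum_add_eq_of_periodic hperd hm)
  · exact_mod_cast monotone_qConv ha (Nat.le_add_left 1 m)
  · exact_mod_cast monotone_qConv ha (by omega : m + 1 ≤ m + d + 1)

theorem stmt12 (a : ℕ → ℤ) (ha0 : 0 ≤ a 0) (ha : ∀ m, 1 ≤ m → 1 ≤ a m)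
    (p l : ℕ) (hl : 1 ≤ l) (hper : ∀ m, p < m → a (m + l) = a m) :
    ∃ L : ℝ, Filter.Tendsto
      (fun m : ℕ => Real.log ((qConv a (m + 1) : ℤ) : ℝ) / ((Nsum a m : ℤ) : ℝ))
      Filter.atTop (nhds L) :=
  stmt12_general a ha p l hl hper
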